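/- Let X₁ and X₂ be identically distributed real random variables with finite positive variance. Then (X₁,X₂) ∈ IC_0 if and only if the law of the random rearrangement of (X₁,X₂) is the product of the marginal laws, i.e. (μ_{(X₁,X₂)} + μ_{(X₂,X₁)})/2 = μ_{X₁} ⊗ μ_{X₂}, where μ_{(X₁,X₂)} denotes the joint law of (X₁,X₂) on ℝ² and μ_{X₁} the common marginal law. -/

import Mathlib

open MeasureTheory ProbabilityTheory

variable {Ω : Type*} [MeasurableSpace Ω]

noncomputable def cov (μ : Measure Ω) (X Y : Ω → ℝ) : ℝ :=
  ∫ ω, (X ω - ∫ a, X a ∂μ) * (Y ω - ∫ a, Y a ∂μ) ∂μ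

noncomputable def corr (μ : Measure Ω) (X Y : Ω → ℝ) : ℝ :=
  cov μ X Y / Real.sqrt (variance X μ * variance Y μ)

def Admissible (μ : Measure Ω) (X Y : Ω → ℝ) (g : ℝ → ℝ) : Prop :=
  Measurable g ∧ MemLp (g ∘ X) 2 μ ∧ MemLp (g ∘ Y) 2 μ ∧
    0 < variance (g ∘ X) μ ∧ 0 < variance (g ∘ Y) μ

def IC (μ : Measure Ω) (X Y : Ω → ℝ) (r : ℝ) : Prop :=
  corr μ X Y = r ∧ ∀ g : ℝ → ℝ, Admissible μ X Y g → corr μ (g ∘ X) (g ∘ Y) = r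

/-!
If the rearranged law is `ρ ⊗ ρ`, with `ρ` the common law of `X₁` and `X₂`, then for every
square-integrable `g` the covariance of `g X₁` and `g X₂` is the integral of the symmetric
function `(g x - m) (g y - m)`, `m = E[g X₁]`, against the rearranged law, hence against `ρ ⊗ ρ`,
where it factors as `(∫ (g - m) dρ)² = 0`.

Conversely, applying `IC_0` to `g = f + t • id` shows that the quadratic polynomial
`t ↦ Cov(f X₁ + t X₁, f X₂ + t X₂)` vanishes wherever the variances of `f Xᵢ + t Xᵢ` do not; these
variances are quadratics with leading coefficients `Var Xᵢ > 0`, so the covariance polynomial is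
zero, and `Cov(f X₁, f X₂) = 0` for every square-integrable `f`, even one with `Var f(Xᵢ) = 0`.
For `f = 1_A, 1_B, 1_A + 1_B` this gives
`P(X₁ ∈ A, X₂ ∈ B) + P(X₁ ∈ B, X₂ ∈ A) = P(X₁ ∈ A) P(X₂ ∈ B) + P(X₁ ∈ B) P(X₂ ∈ A)`,
which by the equality of the marginals says that the two measures agree on rectangles.
-/

open scoped ENNReal

theorem Polynomial.eq_zero_of_eval_eq_zero_of_eval_ne_zero {R : Type*} [CommRing R] [IsDomain R]
    [Infinite R] {p q : Polynomial R} (hq : q ≠ 0) (h : ∀ t, q.eval t ≠ 0 → p.eval t = 0) :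
    p = 0 := by
  have hqp : q * p = 0 := Polynomial.funext fun t => by
    by_cases ht : q.eval t = 0 <;> simp [ht, h]
  exact (mul_eq_zero.mp hqp).resolve_left hq

section Rearrangement

variable {α : Type*} [MeasurableSpace α]

noncomputable def rearrangement (μ : Measure Ω) (X₁ X₂ : Ω → α) : Measure (α × α) :=
  (2 : ℝ≥0∞)⁻¹ • Measure.map (fun ω => (X₁ ω, X₂ ω)) μ +
    (2 : ℝ≥0∞)⁻¹ • Measure.map (fun ω => (X₂ ω, X₁ ω)) μ

variable {μ : Measure Ω} {X₁ X₂ : Ω → α}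

theorem rearrangement_apply_prod (hX₁ : Measurable X₁) (hX₂ : Measurable X₂) {A B : Set α}
    (hA : MeasurableSet A) (hB : MeasurableSet B) :
    rearrangement μ X₁ X₂ (A ×ˢ B) =
      2⁻¹ * μ (X₁ ⁻¹' A ∩ X₂ ⁻¹' B) + 2⁻¹ * μ (X₁ ⁻¹' B ∩ X₂ ⁻¹' A) := by
  rw [rearrangement, Measure.add_apply, Measure.smul_apply, Measure.smul_apply,
    Measure.map_apply (hX₁.prodMk hX₂) (hA.prod hB),
    Measure.map_apply (hX₂.prodMk hX₁) (hA.prod hB), Set.mk_preimage_prod, Set.mk_preimage_prod,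
    Set.inter_comm (X₂ ⁻¹' A), smul_eq_mul, smul_eq_mul]

theorem integral_rearrangement_of_symm {E : Type*} [NormedAddCommGroup E] [NormedSpace ℝ E]
    (hX₁ : Measurable X₁) (hX₂ : Measurable X₂) {F : α × α → E} (hF : StronglyMeasurable F)
    (hsymm : ∀ x y, F (x, y) = F (y, x)) (hint : Integrable (fun ω => F (X₁ ω, X₂ ω)) μ) :
    ∫ p, F p ∂rearrangement μ X₁ X₂ = ∫ ω, F (X₁ ω, X₂ ω) ∂μ := by
  have hswap : (fun ω => F (X₂ ω, X₁ ω)) = fun ω => F (X₁ ω, X₂ ω) := funext fun ω => hsymm _ _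
  have hint₁₂ : Integrable F (Measure.map (fun ω => (X₁ ω, X₂ ω)) μ) :=
    (integrable_map_measure hF.aestronglyMeasurable (hX₁.prodMk hX₂).aemeasurable).mpr hint
  have hint₂₁ : Integrable F (Measure.map (fun ω => (X₂ ω, X₁ ω)) μ) :=
    (integrable_map_measure hF.aestronglyMeasurable (hX₂.prodMk hX₁).aemeasurable).mpr
      (by simpa only [Function.comp_def, hswap] using hint)
  rw [rearrangement, integral_add_measure (hint₁₂.smul_measure (by simp))
      (hint₂₁.smul_measure (by simp)), integral_smul_measure, integral_smul_measure,
    integral_map (hX₁.prodMk hX₂).aemeasurable hF.aestronglyMeasurable,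
    integral_map (hX₂.prodMk hX₁).aemeasurable hF.aestronglyMeasurable, hswap, ← add_smul]
  norm_num

end Rearrangement

section Covariance

variable {μ : Measure Ω}

theorem cov_eq_covariance (X Y : Ω → ℝ) : cov μ X Y = cov[X, Y; μ] := rfl

theorem corr_eq_zero_iff {X Y : Ω → ℝ} (hX : 0 < variance X μ) (hY : 0 < variance Y μ) :
    corr μ X Y = 0 ↔ cov[X, Y; μ] = 0 := by
  rw [corr, div_eq_zero_iff, or_iff_left (Real.sqrt_pos.mpr (mul_pos hX hY)).ne',
    cov_eq_covariance]

theorem covariance_indicator_one [IsProbabilityMeasure μ] {s t : Set Ω} (hs : MeasurableSet s)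
    (ht : MeasurableSet t) :
    cov[s.indicator 1, t.indicator 1; μ] = μ.real (s ∩ t) - μ.real s * μ.real t := by
  have hmemLp {u : Set Ω} (hu : MeasurableSet u) : MemLp (u.indicator 1) 2 μ :=
    memLp_indicator_const 2 hu (1 : ℝ) (by simp)
  rw [covariance_eq_sub (hmemLp hs) (hmemLp ht), ← Set.inter_indicator_one,
    integral_indicator_one (hs.inter ht), integral_indicator_one hs, integral_indicator_one ht]

variable [IsFiniteMeasure μ] {Y₁ Y₂ Z₁ Z₂ : Ω → ℝ}

theorem covariance_add_smul_add_smul (hY₁ : MemLp Y₁ 2 μ) (hY₂ : MemLp Y₂ 2 μ)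
    (hZ₁ : MemLp Z₁ 2 μ) (hZ₂ : MemLp Z₂ 2 μ) (t : ℝ) :
    cov[Y₁ + t • Z₁, Y₂ + t • Z₂; μ] =
      cov[Z₁, Z₂; μ] * t ^ 2 + (cov[Y₁, Z₂; μ] + cov[Z₁, Y₂; μ]) * t + cov[Y₁, Y₂; μ] := by
  rw [covariance_add_left hY₁ (hZ₁.const_smul t) (hY₂.add (hZ₂.const_smul t)),
    covariance_add_right hY₁ hY₂ (hZ₂.const_smul t),
    covariance_add_right (hZ₁.const_smul t) hY₂ (hZ₂.const_smul t),
    covariance_smul_left, covariance_smul_left, covariance_smul_right, covariance_smul_right]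
  ring

theorem variance_add_smul (hY : MemLp Y₁ 2 μ) (hZ : MemLp Z₁ 2 μ) (t : ℝ) :
    Var[Y₁ + t • Z₁; μ] = Var[Z₁; μ] * t ^ 2 + 2 * cov[Y₁, Z₁; μ] * t + Var[Y₁; μ] := by
  rw [← covariance_self (hY.add (hZ.const_smul t)).aemeasurable,
    covariance_add_smul_add_smul hY hY hZ hZ, covariance_self hY.aemeasurable,
    covariance_self hZ.aemeasurable, covariance_comm Z₁]
  ring

open Polynomial in
theorem covariance_eq_zero_of_forall_add_smul (hY₁ : MemLp Y₁ 2 μ) (hY₂ : MemLp Y₂ 2 μ)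
    (hZ₁ : MemLp Z₁ 2 μ) (hZ₂ : MemLp Z₂ 2 μ) (hvZ₁ : 0 < Var[Z₁; μ]) (hvZ₂ : 0 < Var[Z₂; μ])
    (h : ∀ t : ℝ, 0 < Var[Y₁ + t • Z₁; μ] → 0 < Var[Y₂ + t • Z₂; μ] →
      cov[Y₁ + t • Z₁, Y₂ + t • Z₂; μ] = 0) :
    cov[Y₁, Y₂; μ] = 0 := by
  let V (Y Z : Ω → ℝ) : ℝ[X] := C Var[Z; μ] * X ^ 2 + C (2 * cov[Y, Z; μ]) * X + C Var[Y; μ]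
  have hV_ne (Y : Ω → ℝ) {Z : Ω → ℝ} (hvZ : 0 < Var[Z; μ]) : V Y Z ≠ 0 :=
    ne_zero_of_natDegree_gt (n := 1) (by rw [natDegree_quadratic hvZ.ne']; norm_num)
  have hV_pos {Y Z : Ω → ℝ} (hY : MemLp Y 2 μ) (hZ : MemLp Z 2 μ) {t : ℝ}
      (ht : (V Y Z).eval t ≠ 0) : 0 < Var[Y + t • Z; μ] := by
    refine (variance_nonneg _ μ).lt_of_ne' ?_
    rw [variance_add_smul hY hZ]
    simpa [V] using ht
  let P : ℝ[X] := C cov[Z₁, Z₂; μ] * X ^ 2 + C (cov[Y₁, Z₂; μ] + cov[Z₁, Y₂; μ]) * X +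
    C cov[Y₁, Y₂; μ]
  have hP : P = 0 := by
    refine eq_zero_of_eval_eq_zero_of_eval_ne_zero (mul_ne_zero (hV_ne Y₁ hvZ₁) (hV_ne Y₂ hvZ₂))
      fun t ht => ?_
    rw [eval_mul] at ht
    have hcov := h t (hV_pos hY₁ hZ₁ (left_ne_zero_of_mul ht))
      (hV_pos hY₂ hZ₂ (right_ne_zero_of_mul ht))
    rw [covariance_add_smul_add_smul hY₁ hY₂ hZ₁ hZ₂] at hcov
    simpa [P] using hcov
  simpa [P] using congrArg (eval 0) hP

end Covariance

section InvariantCorrelation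

variable {μ : Measure Ω} {X₁ X₂ : Ω → ℝ}

theorem covariance_comp_eq_zero_of_ic_zero [IsFiniteMeasure μ] (hX₁ : MemLp X₁ 2 μ)
    (hX₂ : MemLp X₂ 2 μ) (hv₁ : 0 < variance X₁ μ) (hv₂ : 0 < variance X₂ μ)
    (hIC : IC μ X₁ X₂ 0) {f : ℝ → ℝ} (hf : Measurable f) (hf₁ : MemLp (f ∘ X₁) 2 μ)
    (hf₂ : MemLp (f ∘ X₂) 2 μ) :
    cov[f ∘ X₁, f ∘ X₂; μ] = 0 := by
  refine covariance_eq_zero_of_forall_add_smul hf₁ hf₂ hX₁ hX₂ hv₁ hv₂ fun t ht₁ ht₂ => ?_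
  have hg : Admissible μ X₁ X₂ (fun x => f x + t * x) :=
    ⟨hf.add (measurable_id.const_mul t), hf₁.add (hX₁.const_smul t),
      hf₂.add (hX₂.const_smul t), ht₁, ht₂⟩
  exact (corr_eq_zero_iff ht₁ ht₂).mp (hIC.2 _ hg)

theorem ic_zero_iff_forall_covariance_comp_eq_zero [IsFiniteMeasure μ] (hX₁ : MemLp X₁ 2 μ)
    (hX₂ : MemLp X₂ 2 μ) (hv₁ : 0 < variance X₁ μ) (hv₂ : 0 < variance X₂ μ) :
    IC μ X₁ X₂ 0 ↔ ∀ f : ℝ → ℝ, Measurable f → MemLp (f ∘ X₁) 2 μ → MemLp (f ∘ X₂) 2 μ →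
      cov[f ∘ X₁, f ∘ X₂; μ] = 0 :=
  ⟨fun hIC _ hf hf₁ hf₂ => covariance_comp_eq_zero_of_ic_zero hX₁ hX₂ hv₁ hv₂ hIC hf hf₁ hf₂,
    fun h => ⟨(corr_eq_zero_iff hv₁ hv₂).mpr (h id measurable_id hX₁ hX₂),
      fun g ⟨hg, hg₁, hg₂, hvg₁, hvg₂⟩ => (corr_eq_zero_iff hvg₁ hvg₂).mpr (h g hg hg₁ hg₂)⟩⟩

variable [IsProbabilityMeasure μ]

theorem covariance_comp_eq_zero_of_rearrangement_eq_prod (hX₁ : Measurable X₁)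
    (hX₂ : Measurable X₂) (hident : Measure.map X₁ μ = Measure.map X₂ μ)
    (h : rearrangement μ X₁ X₂ = (Measure.map X₁ μ).prod (Measure.map X₂ μ)) {f : ℝ → ℝ}
    (hf : Measurable f) (hf₁ : MemLp (f ∘ X₁) 2 μ) (hf₂ : MemLp (f ∘ X₂) 2 μ) :
    cov[f ∘ X₁, f ∘ X₂; μ] = 0 := by
  set m := ∫ ω, f (X₁ ω) ∂μ
  have hm : ∫ ω, f (X₂ ω) ∂μ = m := by
    rw [← integral_map hX₂.aemeasurable hf.aestronglyMeasurable, ← hident,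
      integral_map hX₁.aemeasurable hf.aestronglyMeasurable]
  have hF : StronglyMeasurable fun p : ℝ × ℝ => (f p.1 - m) * (f p.2 - m) :=
    (((hf.comp measurable_fst).sub_const m).mul
      ((hf.comp measurable_snd).sub_const m)).stronglyMeasurable
  have hint : Integrable (fun ω => (f (X₁ ω) - m) * (f (X₂ ω) - m)) μ :=
    (hf₁.sub (memLp_const m)).integrable_mul (hf₂.sub (memLp_const m))
  calc cov[f ∘ X₁, f ∘ X₂; μ] = ∫ ω, (f (X₁ ω) - m) * (f (X₂ ω) - m) ∂μ := by
        simp only [covariance, Function.comp_apply, hm]; rfl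
    _ = ∫ p, (f p.1 - m) * (f p.2 - m) ∂rearrangement μ X₁ X₂ :=
        (integral_rearrangement_of_symm hX₁ hX₂ hF (fun _ _ => mul_comm _ _) hint).symm
    _ = (∫ x, f x - m ∂Measure.map X₁ μ) * ∫ x, f x - m ∂Measure.map X₂ μ := by
        rw [h]; exact integral_prod_mul (fun x => f x - m) (fun y => f y - m)
    _ = 0 := by
        rw [integral_map hX₁.aemeasurable (hf.sub_const m).aestronglyMeasurable,
          integral_sub (f := fun ω => f (X₁ ω)) (hf₁.integrable one_le_two) (integrable_const m)]
        simp [m]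

theorem measureReal_preimage_inter_add_of_forall_covariance_comp_eq_zero (hX₁ : Measurable X₁)
    (hX₂ : Measurable X₂)
    (h : ∀ f : ℝ → ℝ, Measurable f → MemLp (f ∘ X₁) 2 μ → MemLp (f ∘ X₂) 2 μ →
      cov[f ∘ X₁, f ∘ X₂; μ] = 0)
    {A B : Set ℝ} (hA : MeasurableSet A) (hB : MeasurableSet B) :
    μ.real (X₁ ⁻¹' A ∩ X₂ ⁻¹' B) + μ.real (X₁ ⁻¹' B ∩ X₂ ⁻¹' A) =
      μ.real (X₁ ⁻¹' A) * μ.real (X₂ ⁻¹' B) + μ.real (X₁ ⁻¹' B) * μ.real (X₂ ⁻¹' A) := by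
  have hcomp {C : Set ℝ} (X : Ω → ℝ) : C.indicator (1 : ℝ → ℝ) ∘ X = (X ⁻¹' C).indicator 1 := by
    ext ω; exact (Set.indicator_comp_right X).symm
  have hmemLp {C : Set ℝ} (hC : MeasurableSet C) {X : Ω → ℝ} (hX : Measurable X) :
      MemLp (C.indicator (1 : ℝ → ℝ) ∘ X) 2 μ :=
    hcomp X ▸ memLp_indicator_const 2 (hX hC) (1 : ℝ) (by simp)
  have hAB := h (A.indicator 1 + B.indicator 1)
    ((measurable_one.indicator hA).add (measurable_one.indicator hB))
    ((hmemLp hA hX₁).add (hmemLp hB hX₁)) ((hmemLp hA hX₂).add (hmemLp hB hX₂))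
  rw [Pi.add_comp, Pi.add_comp, covariance_add_left (hmemLp hA hX₁) (hmemLp hB hX₁)
      ((hmemLp hA hX₂).add (hmemLp hB hX₂)),
    covariance_add_right (hmemLp hA hX₁) (hmemLp hA hX₂) (hmemLp hB hX₂),
    covariance_add_right (hmemLp hB hX₁) (hmemLp hA hX₂) (hmemLp hB hX₂),
    h _ (measurable_one.indicator hA) (hmemLp hA hX₁) (hmemLp hA hX₂),
    h _ (measurable_one.indicator hB) (hmemLp hB hX₁) (hmemLp hB hX₂),
    hcomp, hcomp, hcomp, hcomp, covariance_indicator_one (hX₁ hA) (hX₂ hB),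
    covariance_indicator_one (hX₁ hB) (hX₂ hA)] at hAB
  linarith

theorem rearrangement_eq_prod_of_forall_covariance_comp_eq_zero (hX₁ : Measurable X₁)
    (hX₂ : Measurable X₂) (hident : Measure.map X₁ μ = Measure.map X₂ μ)
    (h : ∀ f : ℝ → ℝ, Measurable f → MemLp (f ∘ X₁) 2 μ → MemLp (f ∘ X₂) 2 μ →
      cov[f ∘ X₁, f ∘ X₂; μ] = 0) :
    rearrangement μ X₁ X₂ = (Measure.map X₁ μ).prod (Measure.map X₂ μ) := by
  have hmarg {C : Set ℝ} (hC : MeasurableSet C) : μ.real (X₂ ⁻¹' C) = μ.real (X₁ ⁻¹' C) := by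
    rw [measureReal_def, measureReal_def, ← Measure.map_apply hX₂ hC, ← hident,
      Measure.map_apply hX₁ hC]
  refine (Measure.prod_eq fun A B hA hB => ?_).symm
  have hrect := measureReal_preimage_inter_add_of_forall_covariance_comp_eq_zero hX₁ hX₂ h hA hB
  rw [hmarg hA, hmarg hB] at hrect
  rw [rearrangement_apply_prod hX₁ hX₂ hA hB, Measure.map_apply hX₁ hA, Measure.map_apply hX₂ hB,
    ← ENNReal.toReal_eq_toReal_iff' (by finiteness) (by finiteness),
    ENNReal.toReal_add (by finiteness) (by finiteness)]
  simp only [ENNReal.toReal_mul, ENNReal.toReal_inv, ENNReal.toReal_ofNat, ← measureReal_def,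
    hmarg hB]
  linarith

end InvariantCorrelation

theorem ic_zero_iff_rearrangement_indep
    (μ : Measure Ω) [IsProbabilityMeasure μ] (X₁ X₂ : Ω → ℝ)
    (hX₁m : Measurable X₁) (hX₂m : Measurable X₂)
    (hident : Measure.map X₁ μ = Measure.map X₂ μ)
    (hX₁2 : MemLp X₁ 2 μ) (hX₂2 : MemLp X₂ 2 μ)
    (hv₁ : 0 < variance X₁ μ) (hv₂ : 0 < variance X₂ μ) :
    IC μ X₁ X₂ 0 ↔
      (2 : ENNReal)⁻¹ • Measure.map (fun ω => (X₁ ω, X₂ ω)) μ +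
          (2 : ENNReal)⁻¹ • Measure.map (fun ω => (X₂ ω, X₁ ω)) μ =
        (Measure.map X₁ μ).prod (Measure.map X₂ μ) := by
  rw [ic_zero_iff_forall_covariance_comp_eq_zero hX₁2 hX₂2 hv₁ hv₂]
  exact ⟨rearrangement_eq_prod_of_forall_covariance_comp_eq_zero hX₁m hX₂m hident,
    fun h _ hf hf₁ hf₂ =>
      covariance_comp_eq_zero_of_rearrangement_eq_prod hX₁m hX₂m hident h hf hf₁ hf₂⟩
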